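/- Any two elements M₀, M₁ of Sp(2n) can be joined by a positive path; i.e., there exists a smooth path μ : [0,1] → Sp(2n) with μ(0) = M₀, μ(1) = M₁, and μ'(t) = J P(t) μ(t) for some continuous family of symmetric positive definite matrices P(t). -/

import Mathlib

/-!
Symplectic transvections `x ↦ x + c ω(v, x) v` generate `Sp(2n)`: inside any `J`-invariant
subspace they act transitively on pairs `(u, v)` with a prescribed value `ω(u, v) ≠ 0`, which
lets one bring a symplectic matrix to the identity one coordinate plane at a time. Each
transvection lies on the affine path `c ↦ 1 + c v vᵀ J` in `Sp(2n)`, so products of these paths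
give a `C¹` path `γ` from `1` to `M₁ M₀⁻¹`. Differentiating `γ J γᵀ = J` shows `γ' = J S γ` with
`S` symmetric and continuous. With `R(θ) = cos θ + sin θ J`, the path `μ(t) = R(2πkt) γ(t) M₀`
satisfies `μ' = J (2πk + R S Rᵀ) μ`, and `2πk + R S Rᵀ` is positive definite as soon as `2πk`
exceeds the maximum of `‖S‖` on `[0, 1]`.
-/

open Matrix Set

noncomputable section

def J2 : Matrix (Fin 2) (Fin 2) ℝ := !![0, -1; 1, 0]

/-- The standard symplectic matrix `J = diag(J₂, …, J₂)`. -/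
def Jn (n : ℕ) : Matrix (Fin 2 × Fin n) (Fin 2 × Fin n) ℝ :=
  Matrix.blockDiagonal fun _ => J2

section Symplectic

variable {ι : Type*} [Fintype ι]

def symplecticForm (J : Matrix ι ι ℝ) (u v : ι → ℝ) : ℝ := u ⬝ᵥ (J *ᵥ v)

variable {J M T : Matrix ι ι ℝ} {u v w x : ι → ℝ}

lemma symplecticForm_swap (hJt : Jᵀ = -J) (u v : ι → ℝ) :
    symplecticForm J v u = -symplecticForm J u v := by
  rw [symplecticForm, dotProduct_mulVec, dotProduct_comm, ← mulVec_transpose, hJt, neg_mulVec,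
    dotProduct_neg, symplecticForm]

lemma symplecticForm_self (hJt : Jᵀ = -J) (u : ι → ℝ) : symplecticForm J u u = 0 := by
  linarith [symplecticForm_swap hJt u u]

lemma symplecticForm_add_left (u v w : ι → ℝ) :
    symplecticForm J (u + v) w = symplecticForm J u w + symplecticForm J v w :=
  add_dotProduct u v _

lemma symplecticForm_sub_left (u v w : ι → ℝ) :
    symplecticForm J (u - v) w = symplecticForm J u w - symplecticForm J v w :=
  sub_dotProduct u v _

lemma symplecticForm_add_right (u v w : ι → ℝ) :
    symplecticForm J u (v + w) = symplecticForm J u v + symplecticForm J u w := by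
  rw [symplecticForm, mulVec_add, dotProduct_add, symplecticForm, symplecticForm]

variable [DecidableEq ι]

lemma symplecticForm_mulVec_self (hJ : J * J = -1) (u : ι → ℝ) :
    symplecticForm J u (J *ᵥ u) = -(u ⬝ᵥ u) := by
  rw [symplecticForm, mulVec_mulVec, hJ, neg_mulVec, one_mulVec, dotProduct_neg]

lemma symplecticForm_single (hJt : Jᵀ = -J) (u : ι → ℝ) (i : ι) :
    symplecticForm J u (Pi.single i 1) = -(J *ᵥ u) i := by
  have h (k : ι) : J k i = -J i k := by simpa using congrFun₂ hJt i k
  rw [symplecticForm, mulVec_single_one, mulVec, dotProduct, dotProduct,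
    ← Finset.sum_neg_distrib]
  exact Finset.sum_congr rfl fun k _ => by rw [col_apply, h]; ring

def symplecticSubmonoid (J : Matrix ι ι ℝ) : Submonoid (Matrix ι ι ℝ) where
  carrier := {M | Mᵀ * J * M = J}
  mul_mem' {A B} hA hB := by
    change (A * B)ᵀ * J * (A * B) = J
    calc (A * B)ᵀ * J * (A * B) = Bᵀ * (Aᵀ * J * A) * B := by
          simp only [transpose_mul, Matrix.mul_assoc]
      _ = J := by rw [hA.out, hB.out]
  one_mem' := by simp

lemma mem_symplecticSubmonoid : M ∈ symplecticSubmonoid J ↔ Mᵀ * J * M = J := Iff.rfl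

lemma symplecticForm_mulVec_mulVec (hM : M ∈ symplecticSubmonoid J) (u v : ι → ℝ) :
    symplecticForm J (M *ᵥ u) (M *ᵥ v) = symplecticForm J u v := by
  rw [symplecticForm, dotProduct_mulVec, ← vecMul_transpose, vecMul_vecMul, ← dotProduct_mulVec,
    mulVec_mulVec, hM.out, symplecticForm]

lemma neg_mul_transpose_mul_mul_eq_one (hJ : J * J = -1) (hM : M ∈ symplecticSubmonoid J) :
    -(J * Mᵀ * J) * M = 1 :=
  calc -(J * Mᵀ * J) * M = -(J * (Mᵀ * J * M)) := by simp only [neg_mul, Matrix.mul_assoc]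
    _ = 1 := by rw [hM.out, hJ, neg_neg]

lemma isUnit_det_of_mem_symplecticSubmonoid (hJ : J * J = -1) (hM : M ∈ symplecticSubmonoid J) :
    IsUnit M.det :=
  isUnit_det_of_left_inverse (neg_mul_transpose_mul_mul_eq_one hJ hM)

lemma inv_mem_symplecticSubmonoid (hJ : J * J = -1) (hM : M ∈ symplecticSubmonoid J) :
    M⁻¹ ∈ symplecticSubmonoid J := by
  have h := mul_nonsing_inv M (isUnit_det_of_mem_symplecticSubmonoid hJ hM)
  change M⁻¹ᵀ * J * M⁻¹ = J
  calc M⁻¹ᵀ * J * M⁻¹ = M⁻¹ᵀ * (Mᵀ * J * M) * M⁻¹ := by rw [hM.out]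
    _ = (M * M⁻¹)ᵀ * J * (M * M⁻¹) := by simp only [transpose_mul, Matrix.mul_assoc]
    _ = J := by rw [h, transpose_one, Matrix.one_mul, Matrix.mul_one]

lemma mul_mul_transpose_eq_of_mem_symplecticSubmonoid (hJ : J * J = -1)
    (hM : M ∈ symplecticSubmonoid J) : M * J * Mᵀ = J := by
  have h := mul_nonsing_inv M (isUnit_det_of_mem_symplecticSubmonoid hJ hM)
  rw [inv_eq_left_inv (neg_mul_transpose_mul_mul_eq_one hJ hM)] at h
  calc M * J * Mᵀ = M * -(J * Mᵀ * J) * J := by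
        simp only [Matrix.mul_neg, Matrix.neg_mul, Matrix.mul_assoc, hJ, Matrix.mul_one, neg_neg]
    _ = J := by rw [h, Matrix.one_mul]

def symplecticTransvection (J : Matrix ι ι ℝ) (v : ι → ℝ) (c : ℝ) : Matrix ι ι ℝ :=
  1 + c • vecMulVec v (v ᵥ* J)

lemma symplecticTransvection_mulVec (v : ι → ℝ) (c : ℝ) (x : ι → ℝ) :
    symplecticTransvection J v c *ᵥ x = x + (c * symplecticForm J v x) • v := by
  rw [symplecticTransvection, add_mulVec, one_mulVec, smul_mulVec, vecMulVec_mulVec,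
    ← dotProduct_mulVec, op_smul_eq_smul, smul_smul, symplecticForm]

lemma symplecticTransvection_mem_symplecticSubmonoid (hJt : Jᵀ = -J) (v : ι → ℝ) (c : ℝ) :
    symplecticTransvection J v c ∈ symplecticSubmonoid J := by
  set N := vecMulVec v (v ᵥ* J)
  have hv : v ᵥ* J ⬝ᵥ v = 0 := by rw [← dotProduct_mulVec]; exact symplecticForm_self hJt v
  have hJv : J *ᵥ v = -(v ᵥ* J) := by rw [← vecMul_transpose, hJt, vecMul_neg]
  have hNJ : Nᵀ * J = vecMulVec (v ᵥ* J) (v ᵥ* J) := by rw [transpose_vecMulVec, vecMulVec_mul]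
  have hJN : J * N = -vecMulVec (v ᵥ* J) (v ᵥ* J) := by
    rw [mul_vecMulVec, hJv, neg_vecMulVec]
  have hNJN : Nᵀ * J * N = 0 := by
    rw [hNJ, vecMulVec_mul_vecMulVec, hv, zero_smul, vecMulVec_zero]
  change (1 + c • N)ᵀ * J * (1 + c • N) = J
  calc (1 + c • N)ᵀ * J * (1 + c • N)
        = J + c • (Nᵀ * J) + c • (J * N) + (c * c) • (Nᵀ * J * N) := by
        simp only [transpose_add, transpose_one, transpose_smul, Matrix.add_mul, Matrix.mul_add,
          Matrix.one_mul, Matrix.mul_one, Matrix.smul_mul, Matrix.mul_smul]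
        module
    _ = J := by rw [hNJN, hNJ, hJN]; module

lemma symplecticTransvection_sub_mulVec_self (hJt : Jᵀ = -J) (h : symplecticForm J u v ≠ 0) :
    symplecticTransvection J (v - u) (symplecticForm J v u)⁻¹ *ᵥ u = v := by
  have hvu : symplecticForm J v u ≠ 0 := by rwa [symplecticForm_swap hJt, neg_ne_zero]
  rw [symplecticTransvection_mulVec, symplecticForm_sub_left, symplecticForm_self hJt, sub_zero,
    inv_mul_cancel₀ hvu, one_smul, add_sub_cancel]

lemma symplecticTransvection_sub_mulVec_of_eq (h : symplecticForm J u x = symplecticForm J v x)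
    (c : ℝ) : symplecticTransvection J (v - u) c *ᵥ x = x := by
  rw [symplecticTransvection_mulVec, symplecticForm_sub_left, h, sub_self, mul_zero, zero_smul,
    add_zero]

def transvectionSubmonoid (J : Matrix ι ι ℝ) (W : Submodule ℝ (ι → ℝ)) :
    Submonoid (Matrix ι ι ℝ) :=
  Submonoid.closure {T | ∃ w ∈ W, ∃ c, symplecticTransvection J w c = T}

variable {W : Submodule ℝ (ι → ℝ)}

lemma transvectionSubmonoid_mono {W' : Submodule ℝ (ι → ℝ)} (h : W ≤ W') :
    transvectionSubmonoid J W ≤ transvectionSubmonoid J W' :=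
  Submonoid.closure_mono fun _ ⟨w, hw, c, hT⟩ => ⟨w, h hw, c, hT⟩

lemma symplecticTransvection_mem_transvectionSubmonoid (hw : w ∈ W) (c : ℝ) :
    symplecticTransvection J w c ∈ transvectionSubmonoid J W :=
  Submonoid.subset_closure ⟨w, hw, c, rfl⟩

lemma transvectionSubmonoid_le_symplecticSubmonoid (hJt : Jᵀ = -J) :
    transvectionSubmonoid J W ≤ symplecticSubmonoid J :=
  Submonoid.closure_le.mpr <| by
    rintro _ ⟨w, -, c, rfl⟩
    exact symplecticTransvection_mem_symplecticSubmonoid hJt w c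

lemma mulVec_mem_of_mem_transvectionSubmonoid (hT : T ∈ transvectionSubmonoid J W) (hx : x ∈ W) :
    T *ᵥ x ∈ W := by
  induction hT using Submonoid.closure_induction generalizing x with
  | mem _ h =>
    obtain ⟨w, hw, c, rfl⟩ := h
    rw [symplecticTransvection_mulVec]
    exact W.add_mem hx (W.smul_mem _ hw)
  | one => rwa [one_mulVec]
  | mul _ _ _ _ hA hB => rw [← mulVec_mulVec]; exact hA (hB hx)

lemma mulVec_eq_self_of_mem_transvectionSubmonoid (hT : T ∈ transvectionSubmonoid J W)
    (hx : ∀ w ∈ W, symplecticForm J w x = 0) : T *ᵥ x = x := by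
  induction hT using Submonoid.closure_induction with
  | mem _ h =>
    obtain ⟨w, hw, c, rfl⟩ := h
    rw [symplecticTransvection_mulVec, hx w hw, mul_zero, zero_smul, add_zero]
  | one => rw [one_mulVec]
  | mul _ _ _ _ hA hB => rw [← mulVec_mulVec, hB, hA]

end Symplectic

section Transitivity

variable {ι : Type*} [Fintype ι] [DecidableEq ι] {J : Matrix ι ι ℝ} {W : Submodule ℝ (ι → ℝ)}
  {u v w : ι → ℝ}

lemma symplecticForm_mulVec_self_ne_zero (hJ : J * J = -1) (hu : u ≠ 0) :
    symplecticForm J u (J *ᵥ u) ≠ 0 := by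
  rw [symplecticForm_mulVec_self hJ, neg_ne_zero]
  exact mt dotProduct_self_eq_zero.mp hu

lemma exists_symplecticForm_ne_zero_and_ne_zero (hJ : J * J = -1)
    (hW : ∀ x ∈ W, J *ᵥ x ∈ W) (hu : u ∈ W) (hv : v ∈ W) (hu0 : u ≠ 0) (hv0 : v ≠ 0) :
    ∃ w ∈ W, symplecticForm J u w ≠ 0 ∧ symplecticForm J v w ≠ 0 := by
  have hu' := symplecticForm_mulVec_self_ne_zero hJ hu0
  have hv' := symplecticForm_mulVec_self_ne_zero hJ hv0
  by_cases hvu : symplecticForm J v (J *ᵥ u) = 0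
  · by_cases huv : symplecticForm J u (J *ᵥ v) = 0
    · refine ⟨J *ᵥ u + J *ᵥ v, W.add_mem (hW u hu) (hW v hv), ?_, ?_⟩
      · rwa [symplecticForm_add_right, huv, add_zero]
      · rwa [symplecticForm_add_right, hvu, zero_add]
    · exact ⟨J *ᵥ v, hW v hv, huv, hv'⟩
  · exact ⟨J *ᵥ u, hW u hu, hu', hvu⟩

lemma exists_mem_transvectionSubmonoid_mulVec_eq (hJ : J * J = -1) (hJt : Jᵀ = -J)
    (hW : ∀ x ∈ W, J *ᵥ x ∈ W) (hu : u ∈ W) (hv : v ∈ W) (hu0 : u ≠ 0) (hv0 : v ≠ 0) :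
    ∃ T ∈ transvectionSubmonoid J W, T *ᵥ u = v := by
  obtain ⟨w, hw, huw, hvw⟩ := exists_symplecticForm_ne_zero_and_ne_zero hJ hW hu hv hu0 hv0
  have hwv : symplecticForm J w v ≠ 0 := by rwa [symplecticForm_swap hJt, neg_ne_zero]
  refine ⟨symplecticTransvection J (v - w) (symplecticForm J v w)⁻¹ *
      symplecticTransvection J (w - u) (symplecticForm J w u)⁻¹,
    mul_mem (symplecticTransvection_mem_transvectionSubmonoid (W.sub_mem hv hw) _)
      (symplecticTransvection_mem_transvectionSubmonoid (W.sub_mem hw hu) _), ?_⟩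
  rw [← mulVec_mulVec, symplecticTransvection_sub_mulVec_self hJt huw,
    symplecticTransvection_sub_mulVec_self hJt hwv]

lemma exists_mem_transvectionSubmonoid_fix_mulVec_eq (hJt : Jᵀ = -J) (hu : u ∈ W) (hw : w ∈ W)
    (hv : v ∈ W) (huw : symplecticForm J u w = symplecticForm J u v)
    (h0 : symplecticForm J u v ≠ 0) :
    ∃ T ∈ transvectionSubmonoid J W, T *ᵥ u = u ∧ T *ᵥ w = v := by
  have swap_eq {w} (h : symplecticForm J u w = symplecticForm J u v) :
      symplecticForm J w u = symplecticForm J v u := by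
    rw [symplecticForm_swap hJt u w, symplecticForm_swap hJt u v, h]
  have direct {w} (hw : w ∈ W) (h : symplecticForm J u w = symplecticForm J u v)
      (hwv : symplecticForm J w v ≠ 0) :
      ∃ T ∈ transvectionSubmonoid J W, T *ᵥ u = u ∧ T *ᵥ w = v :=
    ⟨_, symplecticTransvection_mem_transvectionSubmonoid (W.sub_mem hv hw) _,
      symplecticTransvection_sub_mulVec_of_eq (swap_eq h) _,
      symplecticTransvection_sub_mulVec_self hJt hwv⟩
  by_cases hwv : symplecticForm J w v = 0
  · -- first push `w` to `w + u`, which pairs nontrivially with `v`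
    have hmove : symplecticTransvection J u (symplecticForm J u w)⁻¹ *ᵥ w = w + u := by
      rw [symplecticTransvection_mulVec, inv_mul_cancel₀ (huw ▸ h0), one_smul]
    have hfix : symplecticTransvection J u (symplecticForm J u w)⁻¹ *ᵥ u = u := by
      rw [symplecticTransvection_mulVec, symplecticForm_self hJt, mul_zero, zero_smul, add_zero]
    obtain ⟨T, hT, hTu, hTw⟩ := direct (W.add_mem hw hu)
      (by rw [symplecticForm_add_right, symplecticForm_self hJt, add_zero, huw])
      (by rwa [symplecticForm_add_left, hwv, zero_add])
    exact ⟨T * _, mul_mem hT (symplecticTransvection_mem_transvectionSubmonoid hu _),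
      by rw [← mulVec_mulVec, hfix, hTu], by rw [← mulVec_mulVec, hmove, hTw]⟩
  · exact direct hw huw hwv

lemma exists_mem_transvectionSubmonoid_mulVec_eq_pair (hJ : J * J = -1) (hJt : Jᵀ = -J)
    (hW : ∀ x ∈ W, J *ᵥ x ∈ W) {u₁ v₁ u₂ v₂ : ι → ℝ} (hu₁ : u₁ ∈ W) (hv₁ : v₁ ∈ W) (hu₂ : u₂ ∈ W)
    (hv₂ : v₂ ∈ W) (h : symplecticForm J u₁ v₁ = symplecticForm J u₂ v₂)
    (h0 : symplecticForm J u₂ v₂ ≠ 0) :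
    ∃ T ∈ transvectionSubmonoid J W, T *ᵥ u₁ = u₂ ∧ T *ᵥ v₁ = v₂ := by
  have ne_zero {u v} (h : symplecticForm J u v ≠ 0) : u ≠ 0 := by
    rintro rfl; simp [symplecticForm] at h
  obtain ⟨T₀, hT₀, hT₀u⟩ := exists_mem_transvectionSubmonoid_mulVec_eq hJ hJt hW hu₁ hu₂
    (ne_zero (h ▸ h0)) (ne_zero h0)
  have hw : symplecticForm J u₂ (T₀ *ᵥ v₁) = symplecticForm J u₂ v₂ := by
    rw [← h, ← symplecticForm_mulVec_mulVec
      (transvectionSubmonoid_le_symplecticSubmonoid hJt hT₀) u₁ v₁, hT₀u]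
  obtain ⟨T₁, hT₁, hT₁u, hT₁w⟩ := exists_mem_transvectionSubmonoid_fix_mulVec_eq hJt hu₂
    (mulVec_mem_of_mem_transvectionSubmonoid hT₀ hv₁) hv₂ hw h0
  exact ⟨T₁ * T₀, mul_mem hT₁ hT₀, by rw [← mulVec_mulVec, hT₀u, hT₁u],
    by rw [← mulVec_mulVec, hT₁w]⟩

end Transitivity

section StandardStructure

variable {n : ℕ}

lemma J2_mul_self : J2 * J2 = -1 := by
  ext i j; fin_cases i <;> fin_cases j <;> simp [J2]

lemma J2_transpose : J2ᵀ = -J2 := by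
  ext i j; fin_cases i <;> fin_cases j <;> simp [J2]

lemma Jn_mul_self (n : ℕ) : Jn n * Jn n = -1 := by
  rw [Jn, ← blockDiagonal_mul,
    show (fun _ : Fin n => J2 * J2) = -1 from funext fun _ => J2_mul_self, blockDiagonal_neg,
    blockDiagonal_one]

lemma Jn_transpose (n : ℕ) : (Jn n)ᵀ = -Jn n := by
  rw [Jn, blockDiagonal_transpose, show (fun _ : Fin n => J2ᵀ) = -fun _ => J2 from
    funext fun _ => J2_transpose, blockDiagonal_neg]

lemma Jn_mulVec_apply (x : Fin 2 × Fin n → ℝ) (a : Fin 2) (j : Fin n) :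
    (Jn n *ᵥ x) (a, j) = ∑ b, J2 a b * x (b, j) := by
  simp [Jn, mulVec, dotProduct, Fintype.sum_prod_type, blockDiagonal_apply]

def firstBlocks (n k : ℕ) : Submodule ℝ (Fin 2 × Fin n → ℝ) where
  carrier := {x | ∀ p : Fin 2 × Fin n, k ≤ (p.2 : ℕ) → x p = 0}
  add_mem' hx hy p hp := by simp [hx p hp, hy p hp]
  zero_mem' _ _ := rfl
  smul_mem' c x hx p hp := by simp [hx p hp]

variable {k : ℕ} {x : Fin 2 × Fin n → ℝ}

lemma single_mem_firstBlocks {p : Fin 2 × Fin n} (hp : (p.2 : ℕ) < k) :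
    Pi.single p 1 ∈ firstBlocks n k := by
  intro q hq
  rw [Pi.single_apply, if_neg]
  rintro rfl
  omega

lemma Jn_mulVec_mem_firstBlocks (hx : x ∈ firstBlocks n k) : Jn n *ᵥ x ∈ firstBlocks n k := by
  rintro ⟨a, j⟩ (hj : k ≤ (j : ℕ))
  rw [Jn_mulVec_apply]
  exact Finset.sum_eq_zero fun b _ => by rw [hx (b, j) hj, mul_zero]

lemma mem_firstBlocks_iff :
    x ∈ firstBlocks n k ↔
      ∀ p : Fin 2 × Fin n, k ≤ (p.2 : ℕ) → symplecticForm (Jn n) x (Pi.single p 1) = 0 := by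
  simp_rw [symplecticForm_single (Jn_transpose n), neg_eq_zero]
  refine ⟨fun hx p hp => Jn_mulVec_mem_firstBlocks hx p hp, fun h => ?_⟩
  have hJJ : x = -(Jn n *ᵥ (Jn n *ᵥ x)) := by rw [mulVec_mulVec, Jn_mul_self, neg_mulVec,
    one_mulVec, neg_neg]
  rw [hJJ]
  exact neg_mem (Jn_mulVec_mem_firstBlocks h)

lemma mem_transvectionSubmonoid_of_mulVec_single_eq (k : ℕ) (hk : k ≤ n)
    {M : Matrix (Fin 2 × Fin n) (Fin 2 × Fin n) ℝ}
    (hM : M ∈ symplecticSubmonoid (Jn n))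
    (hfix : ∀ p : Fin 2 × Fin n, k ≤ (p.2 : ℕ) → M *ᵥ Pi.single p 1 = Pi.single p 1) :
    M ∈ transvectionSubmonoid (Jn n) ⊤ := by
  induction k generalizing M with
  | zero =>
    rw [ext_of_mulVec_single (M := M) (N := 1) fun p => by rw [hfix p (Nat.zero_le _), one_mulVec]]
    exact one_mem _
  | succ k ih =>
    have hJ := Jn_mul_self n
    have hJt := Jn_transpose n
    set j : Fin n := ⟨k, hk⟩
    set W := firstBlocks n (k + 1)
    have hMW {x} (hx : x ∈ W) : M *ᵥ x ∈ W := mem_firstBlocks_iff.mpr fun p hp => by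
      rw [← hfix p hp, symplecticForm_mulVec_mulVec hM, mem_firstBlocks_iff.mp hx p hp]
    have hsingle (a : Fin 2) : Pi.single (a, j) 1 ∈ W := single_mem_firstBlocks (by simp [j])
    have hform : symplecticForm (Jn n) (Pi.single (0, j) 1) (Pi.single (1, j) 1) = -1 := by
      simp [symplecticForm, Jn, J2]
    -- `T` carries the standard pair of plane `k` to its image under `M` and fixes the later
    -- planes, so `T⁻¹ * M` fixes the planes from `k` on
    obtain ⟨T, hT, hTe, hTf⟩ := exists_mem_transvectionSubmonoid_mulVec_eq_pair hJ hJt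
      (fun _ => Jn_mulVec_mem_firstBlocks) (hsingle 0) (hsingle 1) (hMW (hsingle 0))
      (hMW (hsingle 1)) (symplecticForm_mulVec_mulVec hM _ _).symm
      (by rw [symplecticForm_mulVec_mulVec hM, hform]; norm_num)
    have hTSp := transvectionSubmonoid_le_symplecticSubmonoid hJt hT
    have hTdet := isUnit_det_of_mem_symplecticSubmonoid hJ hTSp
    have hMT : ∀ p : Fin 2 × Fin n, k ≤ (p.2 : ℕ) →
        M *ᵥ Pi.single p 1 = T *ᵥ Pi.single p 1 := by
      rintro ⟨a, i⟩ (hp : k ≤ (i : ℕ))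
      rcases (show (i : ℕ) = k ∨ k + 1 ≤ i by omega) with hi | hi
      · obtain rfl : i = j := Fin.ext hi
        fin_cases a
        exacts [hTe.symm, hTf.symm]
      · rw [hfix _ hi, mulVec_eq_self_of_mem_transvectionSubmonoid hT fun w hw =>
          mem_firstBlocks_iff.mp hw _ hi]
    have hN : T⁻¹ * M ∈ transvectionSubmonoid (Jn n) ⊤ :=
      ih (Nat.le_of_succ_le hk) (mul_mem (inv_mem_symplecticSubmonoid hJ hTSp) hM) fun p hp => by
        rw [← mulVec_mulVec, hMT p hp, mulVec_mulVec, nonsing_inv_mul _ hTdet, one_mulVec]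
    rw [← Matrix.one_mul M, ← mul_nonsing_inv T hTdet, Matrix.mul_assoc]
    exact mul_mem (transvectionSubmonoid_mono le_top hT) hN

theorem symplecticSubmonoid_Jn_le_transvectionSubmonoid :
    symplecticSubmonoid (Jn n) ≤ transvectionSubmonoid (Jn n) ⊤ := fun _ hM =>
  mem_transvectionSubmonoid_of_mulVec_single_eq n le_rfl hM fun p hp => absurd p.2.isLt (by omega)

end StandardStructure

open scoped Matrix.Norms.L2Operator

section Rotation

variable {ι : Type*} [DecidableEq ι] {J : Matrix ι ι ℝ}

/-- For `J = Jn n` this is the block rotation `R₂ₙ(θ)`. -/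
def symplecticRotation (J : Matrix ι ι ℝ) (θ : ℝ) : Matrix ι ι ℝ := Real.cos θ • 1 + Real.sin θ • J

lemma symplecticRotation_zero : symplecticRotation J 0 = 1 := by simp [symplecticRotation]

lemma symplecticRotation_nat_mul_two_pi (k : ℕ) : symplecticRotation J (k * (2 * Real.pi)) = 1 := by
  simp [symplecticRotation, Real.cos_periodic.nat_mul_eq, Real.sin_periodic.nat_mul_eq]

lemma continuous_symplecticRotation : Continuous (symplecticRotation J) := by
  unfold symplecticRotation; fun_prop

variable [Fintype ι]

lemma mul_symplecticRotation_comm (θ : ℝ) :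
    J * symplecticRotation J θ = symplecticRotation J θ * J := by
  simp [symplecticRotation, Matrix.mul_add, Matrix.add_mul]

lemma symplecticRotation_transpose_mul_self (hJ : J * J = -1) (hJt : Jᵀ = -J) (θ : ℝ) :
    (symplecticRotation J θ)ᵀ * symplecticRotation J θ = 1 := by
  simp only [symplecticRotation, transpose_add, transpose_smul, transpose_one, hJt, Matrix.add_mul,
    Matrix.mul_add, Matrix.smul_mul, Matrix.mul_smul, Matrix.one_mul, Matrix.mul_one,
    Matrix.neg_mul, hJ, smul_neg]
  calc _ = (Real.cos θ ^ 2 + Real.sin θ ^ 2) • (1 : Matrix ι ι ℝ) := by module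
    _ = 1 := by rw [Real.cos_sq_add_sin_sq, one_smul]

lemma symplecticRotation_mem (hJ : J * J = -1) (hJt : Jᵀ = -J) (θ : ℝ) :
    symplecticRotation J θ ∈ symplecticSubmonoid J := by
  rw [mem_symplecticSubmonoid, Matrix.mul_assoc, mul_symplecticRotation_comm, ← Matrix.mul_assoc,
    symplecticRotation_transpose_mul_self hJ hJt, Matrix.one_mul]

lemma hasDerivAt_symplecticRotation (hJ : J * J = -1) (θ : ℝ) :
    HasDerivAt (symplecticRotation J) (J * symplecticRotation J θ) θ := by
  refine (((Real.hasDerivAt_cos θ).smul_const (1 : Matrix ι ι ℝ)).add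
    ((Real.hasDerivAt_sin θ).smul_const J)).congr_deriv ?_
  simp only [symplecticRotation, Matrix.mul_add, Matrix.mul_smul, Matrix.mul_one, hJ]
  module

end Rotation

section Paths

variable {ι : Type*} [Fintype ι] [DecidableEq ι] {γ : ℝ → Matrix ι ι ℝ} {γ' : Matrix ι ι ℝ} {t : ℝ}

lemma HasDerivAt.matrix_transpose (h : HasDerivAt γ γ' t) :
    HasDerivAt (fun s => (γ s)ᵀ) γ'ᵀ t :=
  (LinearMap.toContinuousLinearMap (transposeLinearEquiv ι ι ℝ ℝ).toLinearMap).hasFDerivAt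
    |>.comp_hasDerivAt t h

lemma HasDerivAt.matrix_elem (h : HasDerivAt γ γ' t) (i j : ι) :
    HasDerivAt (fun s => γ s i j) (γ' i j) t :=
  (LinearMap.toContinuousLinearMap (entryLinearMap ℝ ℝ i j)).hasFDerivAt.comp_hasDerivAt t h

variable {J : Matrix ι ι ℝ}

def c1PathComponentOne (J : Matrix ι ι ℝ) : Submonoid (Matrix ι ι ℝ) where
  carrier := {A | ∃ γ : ℝ → Matrix ι ι ℝ,
    ContDiff ℝ 1 γ ∧ (∀ t, γ t ∈ symplecticSubmonoid J) ∧ γ 0 = 1 ∧ γ 1 = A}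
  mul_mem' := by
    rintro _ _ ⟨γ, hγ, hγJ, hγ0, rfl⟩ ⟨δ, hδ, hδJ, hδ0, rfl⟩
    exact ⟨fun t => γ t * δ t, hγ.mul hδ, fun t => mul_mem (hγJ t) (hδJ t),
      by simp only [hγ0, hδ0, Matrix.one_mul], rfl⟩
  one_mem' := ⟨fun _ => 1, contDiff_const, fun _ => one_mem _, rfl, rfl⟩

lemma transvectionSubmonoid_le_c1PathComponentOne (hJt : Jᵀ = -J) (W : Submodule ℝ (ι → ℝ)) :
    transvectionSubmonoid J W ≤ c1PathComponentOne J :=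
  Submonoid.closure_le.mpr <| by
    rintro _ ⟨w, -, c, rfl⟩
    refine ⟨fun t => symplecticTransvection J w (t * c), ?_,
      fun t => symplecticTransvection_mem_symplecticSubmonoid hJt w _,
      by simp [symplecticTransvection], by simp⟩
    unfold symplecticTransvection
    fun_prop

/-- `J⁻¹ γ' γ⁻¹`, with `J⁻¹ = -J` and `γ⁻¹ = -J γᵀ J` substituted. -/
def hamiltonian (J : Matrix ι ι ℝ) (γ : ℝ → Matrix ι ι ℝ) (t : ℝ) : Matrix ι ι ℝ :=
  J * (deriv γ t * J * (γ t)ᵀ) * J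

lemma hasDerivAt_mul_hamiltonian_mul (hJ : J * J = -1) (hγ : DifferentiableAt ℝ γ t)
    (hγJ : γ t ∈ symplecticSubmonoid J) : HasDerivAt γ (J * hamiltonian J γ t * γ t) t := by
  refine hγ.hasDerivAt.congr_deriv (Eq.symm ?_)
  calc J * hamiltonian J γ t * γ t = J * J * deriv γ t * (J * ((γ t)ᵀ * J * γ t)) := by
        simp only [hamiltonian, Matrix.mul_assoc]
    _ = deriv γ t := by rw [hγJ.out, hJ]; simp

lemma hamiltonian_transpose (hJ : J * J = -1) (hJt : Jᵀ = -J) (hγ : Differentiable ℝ γ)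
    (hγJ : ∀ t, γ t ∈ symplecticSubmonoid J) (t : ℝ) :
    (hamiltonian J γ t)ᵀ = hamiltonian J γ t := by
  have hd := ((hγ t).hasDerivAt.mul_const J).fun_mul (hγ t).hasDerivAt.matrix_transpose
  -- `γ J γᵀ` is constant, so its derivative `γ' J γᵀ + γ J γ'ᵀ` vanishes
  have hconst : (fun s => γ s * J * (γ s)ᵀ) = fun _ => J :=
    funext fun s => mul_mul_transpose_eq_of_mem_symplecticSubmonoid hJ (hγJ s)
  rw [hconst] at hd
  have hsymm : (deriv γ t * J * (γ t)ᵀ)ᵀ = deriv γ t * J * (γ t)ᵀ := by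
    refine Eq.trans ?_ (neg_eq_of_add_eq_zero_left ((hasDerivAt_const t J).unique hd).symm)
    simp [transpose_mul, hJt, Matrix.mul_assoc]
  rw [hamiltonian, transpose_mul, transpose_mul, hsymm, hJt]
  simp only [Matrix.neg_mul, Matrix.mul_neg, neg_neg, Matrix.mul_assoc]

lemma continuous_hamiltonian (hγ : ContDiff ℝ 1 γ) : Continuous (hamiltonian J γ) :=
  (continuous_const.mul (((hγ.continuous_deriv le_rfl).mul continuous_const).mul
    hγ.continuous.matrix_transpose)).mul continuous_const

lemma hasDerivAt_symplecticRotation_mul (hJ : J * J = -1) (hJt : Jᵀ = -J) (a : ℝ)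
    {S : Matrix ι ι ℝ} (hγ : HasDerivAt γ (J * S * γ t) t) :
    HasDerivAt (fun s => symplecticRotation J (a * s) * γ s)
      (J * (a • 1 + symplecticRotation J (a * t) * S * (symplecticRotation J (a * t))ᵀ) *
        (symplecticRotation J (a * t) * γ t)) t := by
  have hR : HasDerivAt (fun s => symplecticRotation J (a * s))
      (a • (J * symplecticRotation J (a * t))) t := by
    have h := (hasDerivAt_symplecticRotation hJ (a * t)).scomp t ((hasDerivAt_id t).const_mul a)
    rw [mul_one] at h
    exact h
  refine (hR.fun_mul hγ).congr_deriv (Eq.symm ?_)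
  set R := symplecticRotation J (a * t)
  have hRR : Rᵀ * R = 1 := symplecticRotation_transpose_mul_self hJ hJt _
  have hJR : J * R = R * J := mul_symplecticRotation_comm _
  calc J * (a • 1 + R * S * Rᵀ) * (R * γ t)
        = a • (J * R) * γ t + J * R * S * (Rᵀ * R) * γ t := by
        simp only [Matrix.mul_add, Matrix.add_mul, Matrix.mul_smul, Matrix.smul_mul,
          Matrix.mul_one, Matrix.mul_assoc]
    _ = a • (J * R) * γ t + R * (J * S * γ t) := by
        rw [hRR, hJR]
        simp only [Matrix.mul_one, Matrix.mul_assoc]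

end Paths

section Positivity

variable {ι : Type*} [Fintype ι] [DecidableEq ι] {S R : Matrix ι ι ℝ} {c : ℝ}

lemma abs_dotProduct_mulVec_le (S : Matrix ι ι ℝ) (x : ι → ℝ) :
    |x ⬝ᵥ (S *ᵥ x)| ≤ ‖S‖ * (x ⬝ᵥ x) := by
  set u : EuclideanSpace ℝ ι := WithLp.toLp 2 x
  have hu : ‖u‖ ^ 2 = x ⬝ᵥ x := by
    rw [EuclideanSpace.norm_sq_eq]; simp [u, dotProduct, sq]
  have hinner : inner ℝ u ((EuclideanSpace.equiv ι ℝ).symm (S *ᵥ x)) = x ⬝ᵥ (S *ᵥ x) := by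
    simp [u, EuclideanSpace.inner_eq_star_dotProduct, dotProduct_comm]
  calc |x ⬝ᵥ (S *ᵥ x)| ≤ ‖u‖ * ‖(EuclideanSpace.equiv ι ℝ).symm (S *ᵥ x)‖ :=
        hinner ▸ abs_real_inner_le_norm _ _
    _ ≤ ‖u‖ * (‖S‖ * ‖u‖) := by gcongr; exact S.l2_opNorm_mulVec u
    _ = ‖S‖ * (x ⬝ᵥ x) := by rw [← hu]; ring

lemma posDef_smul_one_add (hS : Sᵀ = S) (hc : ‖S‖ < c) : (c • 1 + S).PosDef := by
  refine PosDef.of_dotProduct_mulVec_pos ?_ fun x hx => ?_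
  · simp [IsHermitian, conjTranspose_eq_transpose_of_trivial, hS]
  · have hx' : 0 < x ⬝ᵥ x := by simpa using dotProduct_self_star_pos_iff.mpr hx
    have := neg_le_of_abs_le (abs_dotProduct_mulVec_le S x)
    simp only [star_trivial, add_mulVec, smul_mulVec, one_mulVec, dotProduct_add,
      dotProduct_smul, smul_eq_mul]
    nlinarith

lemma posDef_smul_one_add_mul_mul_transpose (hS : Sᵀ = S) (hc : ‖S‖ < c) (hR : Rᵀ * R = 1) :
    (c • 1 + R * S * Rᵀ).PosDef := by
  have hR' : R * Rᵀ = 1 := mul_eq_one_comm.mp hR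
  have h : c • 1 + R * S * Rᵀ = R * (c • 1 + S) * Rᴴ := by
    rw [conjTranspose_eq_transpose_of_trivial, Matrix.mul_add, Matrix.add_mul, Matrix.mul_smul,
      Matrix.smul_mul, Matrix.mul_one, hR']
  rw [h]
  refine (posDef_smul_one_add hS hc).mul_mul_conjTranspose_same fun x y hxy => ?_
  simpa [hR'] using congrArg (· ᵥ* Rᵀ) hxy

end Positivity

section PositivePath

variable {ι : Type*} [Fintype ι] [DecidableEq ι] {J : Matrix ι ι ℝ}

theorem exists_positive_path (hJ : J * J = -1) (hJt : Jᵀ = -J) {A M₀ : Matrix ι ι ℝ}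
    (hA : A ∈ c1PathComponentOne J) (hM₀ : M₀ ∈ symplecticSubmonoid J) :
    ∃ μ P : ℝ → Matrix ι ι ℝ, μ 0 = M₀ ∧ μ 1 = A * M₀ ∧ (∀ t, μ t ∈ symplecticSubmonoid J) ∧
      Continuous P ∧ ∀ t ∈ Icc (0 : ℝ) 1, (P t).PosDef ∧ HasDerivAt μ (J * P t * μ t) t := by
  obtain ⟨γ, hγ, hγJ, hγ0, hγ1⟩ := hA
  have hS := continuous_hamiltonian (J := J) hγ
  obtain ⟨C, hC⟩ := isCompact_Icc.exists_bound_of_continuousOn hS.continuousOn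
  obtain ⟨k, hk⟩ := exists_nat_gt (C / (2 * Real.pi))
  set a : ℝ := k * (2 * Real.pi)
  set R := fun t => symplecticRotation J (a * t)
  have hR : Continuous R := continuous_symplecticRotation.comp (continuous_const_mul a)
  refine ⟨fun t => R t * (γ t * M₀), fun t => a • 1 + R t * hamiltonian J γ t * (R t)ᵀ,
    by simp [R, hγ0, symplecticRotation_zero],
    by simp [R, a, hγ1, symplecticRotation_nat_mul_two_pi],
    fun t => mul_mem (symplecticRotation_mem hJ hJt _) (mul_mem (hγJ t) hM₀),
    continuous_const.add ((hR.mul hS).mul hR.matrix_transpose), fun t ht => ⟨?_, ?_⟩⟩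
  · exact posDef_smul_one_add_mul_mul_transpose
      (hamiltonian_transpose hJ hJt (hγ.differentiable one_ne_zero) hγJ t)
      ((hC t ht).trans_lt <| (div_lt_iff₀ (by positivity)).mp hk)
      (symplecticRotation_transpose_mul_self hJ hJt _)
  · refine hasDerivAt_symplecticRotation_mul hJ hJt a ?_
    exact ((hasDerivAt_mul_hamiltonian_mul hJ (hγ.differentiable one_ne_zero t) (hγJ t)).mul_const
      M₀).congr_deriv (by simp only [Matrix.mul_assoc])

end PositivePath

/-- Any two elements of `Sp(2n)` can be joined by a positive path: a `C¹` path `μ`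
with `μ(0) = M₀`, `μ(1) = M₁`, and `μ'(t) = J P(t) μ(t)` for a continuous family of
symmetric positive definite matrices `P(t)`. -/
theorem join_by_positive_path {n : ℕ}
    (M₀ M₁ : Matrix (Fin 2 × Fin n) (Fin 2 × Fin n) ℝ)
    (h₀ : M₀ᵀ * Jn n * M₀ = Jn n) (h₁ : M₁ᵀ * Jn n * M₁ = Jn n) :
    ∃ μ P : ℝ → Matrix (Fin 2 × Fin n) (Fin 2 × Fin n) ℝ,
      μ 0 = M₀ ∧ μ 1 = M₁ ∧
      (∀ t ∈ Icc (0:ℝ) 1, (μ t)ᵀ * Jn n * μ t = Jn n) ∧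
      (∀ i j, ContinuousOn (fun t => P t i j) (Icc (0:ℝ) 1)) ∧
      ∀ t ∈ Icc (0:ℝ) 1, (P t)ᵀ = P t ∧ (P t).PosDef ∧
        ∀ i j, HasDerivAt (fun s => μ s i j) ((Jn n * P t * μ t) i j) t := by
  have hJ := Jn_mul_self n
  have hM₀ : M₀ ∈ symplecticSubmonoid (Jn n) := h₀
  have hA : M₁ * M₀⁻¹ ∈ c1PathComponentOne (Jn n) :=
    transvectionSubmonoid_le_c1PathComponentOne (Jn_transpose n) ⊤ <|
      symplecticSubmonoid_Jn_le_transvectionSubmonoid <|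
        mul_mem h₁ (inv_mem_symplecticSubmonoid hJ hM₀)
  obtain ⟨μ, P, hμ0, hμ1, hμJ, hP, hpos⟩ := exists_positive_path hJ (Jn_transpose n) hA hM₀
  refine ⟨μ, P, hμ0, ?_, fun t _ => hμJ t, fun i j => (hP.matrix_elem i j).continuousOn,
    fun t ht => ⟨?_, (hpos t ht).1, fun i j => (hpos t ht).2.matrix_elem i j⟩⟩
  · rw [hμ1, nonsing_inv_mul_cancel_right (h := isUnit_det_of_mem_symplecticSubmonoid hJ hM₀)]
  · simpa [conjTranspose_eq_transpose_of_trivial] using (hpos t ht).1.isHermitian.eq
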